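/- Let q with 0 < |q| < 1 and a a complex number with a ≠ −q^{m} for all integers m ≤ 0. Then ∑_{k=0}^{∞} q^{k(k-1)/2} a^k / (−a; q)_{k+1} = 1. -/

import Mathlib

open Finset Complex

/-- finite q-Pochhammer symbol `(x; q)_n` -/
noncomputable def qp (q x : ℂ) (n : ℕ) : ℂ := ∏ j ∈ Finset.range n, (1 - x * q ^ j)

/-- infinite q-Pochhammer symbol `(x; q)_∞` -/
noncomputable def qpi (q x : ℂ) : ℂ := ∏' j : ℕ, (1 - x * q ^ j)

/-!
With `u k = q^{k(k-1)/2} a^k / (-a;q)_k` (`qpQuot q a k`), the `k`-th term of the series is `u k - u (k+1)`,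
since `u (k+1) = u k · a q^k / (1 + a q^k)`. The same recursion shows, by the ratio test,
that `u` is summable, so the series telescopes to `u 0 = 1`.
-/

open Filter Topology

theorem Summable.hasSum_sub_succ {α : Type*} [AddCommGroup α] [TopologicalSpace α]
    [IsTopologicalAddGroup α] [T2Space α] {u : ℕ → α} (hu : Summable u) :
    HasSum (fun n => u n - u (n + 1)) (u 0) := by
  have hshift : Summable fun n => u (n + 1) := (summable_nat_add_iff 1).2 hu
  convert hu.hasSum.sub hshift.hasSum using 1
  rw [hu.tsum_eq_zero_add, add_sub_cancel_right]

theorem summable_of_succ_eq_mul {R : Type*} [NormedRing R] [CompleteSpace R] {u c : ℕ → R}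
    (hc : Tendsto c atTop (𝓝 0)) (hu : ∀ n, u (n + 1) = c n * u n) : Summable u := by
  refine summable_of_ratio_norm_eventually_le (r := 1 / 2) (by norm_num) ?_
  filter_upwards [hc.norm.eventually (gt_mem_nhds (by norm_num : ‖(0 : R)‖ < 1 / 2))] with n hn
  calc ‖u (n + 1)‖ = ‖c n * u n‖ := by rw [hu]
    _ ≤ ‖c n‖ * ‖u n‖ := norm_mul_le _ _
    _ ≤ 1 / 2 * ‖u n‖ := by gcongr

theorem Nat.succ_mul_div_two (k : ℕ) : (k + 1) * k / 2 = k * (k - 1) / 2 + k := by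
  rcases k with _ | n
  · rfl
  · rw [show (n + 1 + 1) * (n + 1) = (n + 1) * n + (n + 1) * 2 by ring,
      Nat.add_mul_div_right _ _ two_pos, Nat.add_sub_cancel]

theorem qp_zero (q x : ℂ) : qp q x 0 = 1 := prod_range_zero _

theorem qp_succ (q x : ℂ) (n : ℕ) : qp q x (n + 1) = qp q x n * (1 - x * q ^ n) :=
  prod_range_succ _ _

noncomputable def qpQuot (q a : ℂ) (k : ℕ) : ℂ := q ^ (k * (k - 1) / 2) * a ^ k / qp q (-a) k

theorem qpQuot_zero (q a : ℂ) : qpQuot q a 0 = 1 := by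
  simp [qpQuot, qp_zero]

theorem qpQuot_succ (q a : ℂ) (k : ℕ) :
    qpQuot q a (k + 1) = a * q ^ k / (1 + a * q ^ k) * qpQuot q a k := by
  rw [qpQuot, qpQuot, Nat.add_sub_cancel, Nat.succ_mul_div_two, qp_succ, ← mul_div_mul_comm]
  ring_nf

theorem qpQuot_sub_succ (q a : ℂ) (k : ℕ) (hk : a * q ^ k ≠ -1) :
    qpQuot q a k - qpQuot q a (k + 1) = q ^ (k * (k - 1) / 2) * a ^ k / qp q (-a) (k + 1) := by
  have hk' : 1 + a * q ^ k ≠ 0 := fun h => hk (by linear_combination h)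
  rw [qpQuot_succ, qp_succ, qpQuot, ← div_div, neg_mul, sub_neg_eq_add]
  generalize q ^ (k * (k - 1) / 2) * a ^ k / qp q (-a) k = x
  rw [eq_div_iff hk']
  field_simp
  ring

theorem summable_qpQuot (q a : ℂ) (hq : ‖q‖ < 1) : Summable (qpQuot q a) := by
  refine summable_of_succ_eq_mul ?_ (qpQuot_succ q a)
  have hpow : Tendsto (fun k : ℕ => a * q ^ k) atTop (𝓝 0) := by
    simpa using (tendsto_pow_atTop_nhds_zero_of_norm_lt_one hq).const_mul a
  have hratio := hpow.div (tendsto_const_nhds.add hpow) (by norm_num : (1 : ℂ) + 0 ≠ 0)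
  rwa [zero_div] at hratio

theorem stmt_6_general (q a : ℂ) (hq : ‖q‖ < 1)
    (ha : ∀ m : ℕ, a * q ^ m ≠ -1) :
    ∑' k : ℕ, q ^ (k * (k - 1) / 2) * a ^ k / qp q (-a) (k + 1) = 1 := by
  have htel := (summable_qpQuot q a hq).hasSum_sub_succ
  simp only [qpQuot_sub_succ q a _ (ha _), qpQuot_zero] at htel
  exact htel.tsum_eq

theorem stmt_6 (q a : ℂ) (hq0 : 0 < ‖q‖) (hq : ‖q‖ < 1)
    (ha : ∀ m : ℕ, a * q ^ m ≠ -1) :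
    ∑' k : ℕ, q ^ (k * (k - 1) / 2) * a ^ k / qp q (-a) (k + 1) = 1 :=
  stmt_6_general q a hq ha
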